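/- arXiv:1107.1205 — 2 statements merged into one kernel-verified Lean document; each statement's English description precedes it below -/
import Mathlib

section
/- In the two-state counterexample system, linear and branching distances differ: let σ, τ be traces over K with σ₀ = τ₀, and consider the WTS where state s branches after one σ₀-step into continuations σ¹ and τ¹, while state t immediately branches into the full traces σ and τ. Then Tr(s) = Tr(t) = {σ, τ}, hence the Hausdorff linear distance d_L(s,t) = 0, while the branching distance equals min(d_T(σ,τ), d_T(τ,σ)). In particular, if d_T is not one-step indiscriminate (i.e., d_T(σ,τ) > 0 and d_T(τ,σ) > 0 for some σ, τ with σ₀ = τ₀), then d_L(s,t) = 0 < d_B(s,t). -/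
/-! Both states have the trace set `{σ, τ}`, so the Hausdorff distance vanishes by reflexivity
of `dT`. In the simulation game, however, Player 2 has to choose between the σ- and the τ-branch
at `t` in the first round, whereas the branching at `s` happens only in the second round: Player 1
sees Player 2's choice and takes the other branch, forcing a payoff `dT σ τ` or `dT τ σ`.
Conversely, whatever Player 1 does, Player 2 may follow either branch, and one of these two
answers pays at most `min (dT σ τ) (dT τ σ)`. -/

open ENNReal

/-- A finite path in a weighted transition system: a start state together
with a list of (weight, target-state) steps. -/
abbrev FPath (S K : Type*) := S × List (K × S)

/-- The last state of a finite path. -/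
def FPath.last {S K : Type*} (p : FPath S K) : S :=
  (p.2.getLast?).elim p.1 Prod.snd

/-- Extending a finite path by one step. -/
def FPath.extend {S K : Type*} (p : FPath S K) (m : K × S) : FPath S K :=
  (p.1, p.2 ++ [m])

/-- A Player-1 strategy is valid if it always proposes a transition from the
last state of Player 1's path. -/
def ValidStrat1 {S K : Type*} (T : S → K → S → Prop)
    (θ : FPath S K → FPath S K → K × S) : Prop :=
  ∀ p q : FPath S K, T p.last (θ p q).1 (θ p q).2

/-- A Player-2 strategy is valid if it always proposes a transition from the
last state of Player 2's path. -/
def ValidStrat2 {S K : Type*} (T : S → K → S → Prop)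
    (θ : FPath S K → FPath S K → K × S) : Prop :=
  ∀ p q : FPath S K, T q.last (θ p q).1 (θ p q).2

/-- The sequence of configurations of the simulation game: in each round,
Player 1 extends the first path, then Player 2 extends the second path. -/
def play {S K : Type*} (θ1 θ2 : FPath S K → FPath S K → K × S) (s t : S) :
    ℕ → FPath S K × FPath S K
  | 0 => ((s, []), (t, []))
  | n + 1 =>
    let c := play θ1 θ2 s t n
    let p' := c.1.extend (θ1 c.1 c.2)
    (p', c.2.extend (θ2 p' c.2))

/-- The trace built by Player 1. -/
def trace1 {S K : Type*} (θ1 θ2 : FPath S K → FPath S K → K × S) (s t : S)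
    (n : ℕ) : K :=
  (θ1 (play θ1 θ2 s t n).1 (play θ1 θ2 s t n).2).1

/-- The trace built by Player 2. -/
def trace2 {S K : Type*} (θ1 θ2 : FPath S K → FPath S K → K × S) (s t : S)
    (n : ℕ) : K :=
  (θ2 ((play θ1 θ2 s t n).1.extend (θ1 (play θ1 θ2 s t n).1
    (play θ1 θ2 s t n).2)) (play θ1 θ2 s t n).2).1

/-- The value of the simulation game (the branching distance). -/
noncomputable def gameValue {S K : Type*} (T : S → K → S → Prop)
    (dT : (ℕ → K) → (ℕ → K) → ℝ≥0∞) (s t : S) : ℝ≥0∞ :=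
  ⨆ θ1 : {θ // ValidStrat1 T θ}, ⨅ θ2 : {θ // ValidStrat2 T θ},
    dT (trace1 θ1.1 θ2.1 s t) (trace2 θ1.1 θ2.1 s t)

/-- Infinite paths and their traces. -/
def IsInfPath {S K : Type*} (T : S → K → S → Prop) (s : S)
    (st : ℕ → S) (w : ℕ → K) : Prop :=
  st 0 = s ∧ ∀ j, T (st j) (w j) (st (j + 1))

/-- The set of traces of infinite paths from a state. -/
def TrSet {S K : Type*} (T : S → K → S → Prop) (s : S) : Set (ℕ → K) :=
  {w | ∃ st : ℕ → S, IsInfPath T s st w}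

/-- The state space of the counterexample system: `inl 0` = s, `inl 1` = the
intermediate state of s, `inl 2` = t, and `inr (b, n)` is the state of the
σ-chain (b = true) or τ-chain (b = false) about to emit the n-th weight. -/
abbrev S11 := Fin 3 ⊕ (Bool × ℕ)

/-- The transition relation of the counterexample system: s branches after
one σ₀-step into the tails of σ and τ, while t branches immediately into the
full traces σ and τ. -/
inductive T11 {K : Type*} (σ τ : ℕ → K) : S11 → K → S11 → Prop
  | start : T11 σ τ (.inl 0) (σ 0) (.inl 1)
  | uL : T11 σ τ (.inl 1) (σ 1) (.inr (true, 2))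
  | uR : T11 σ τ (.inl 1) (τ 1) (.inr (false, 2))
  | tL : T11 σ τ (.inl 2) (σ 0) (.inr (true, 1))
  | tR : T11 σ τ (.inl 2) (τ 0) (.inr (false, 1))
  | chainL (n : ℕ) : T11 σ τ (.inr (true, n)) (σ n) (.inr (true, n + 1))
  | chainR (n : ℕ) : T11 σ τ (.inr (false, n)) (τ n) (.inr (false, n + 1))

section Game

variable {S K : Type*} {T : S → K → S → Prop} {θ1 θ2 : FPath S K → FPath S K → K × S}
  {s t : S}

@[simp]
lemma FPath.last_extend (p : FPath S K) (m : K × S) : (p.extend m).last = m.2 := by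
  simp [FPath.last, FPath.extend]

lemma play_succ_fst_last (n : ℕ) :
    (play θ1 θ2 s t (n + 1)).1.last = (θ1 (play θ1 θ2 s t n).1 (play θ1 θ2 s t n).2).2 :=
  FPath.last_extend _ _

lemma play_succ_snd_last (n : ℕ) :
    (play θ1 θ2 s t (n + 1)).2.last =
      (θ2 ((play θ1 θ2 s t n).1.extend (θ1 (play θ1 θ2 s t n).1 (play θ1 θ2 s t n).2))
        (play θ1 θ2 s t n).2).2 :=
  FPath.last_extend _ _

lemma isInfPath_trace1 (h : ValidStrat1 T θ1) :
    IsInfPath T s (fun n => (play θ1 θ2 s t n).1.last) (trace1 θ1 θ2 s t) :=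
  ⟨rfl, fun n => by dsimp only; rw [play_succ_fst_last]; exact h _ _⟩

lemma isInfPath_trace2 (h : ValidStrat2 T θ2) :
    IsInfPath T t (fun n => (play θ1 θ2 s t n).2.last) (trace2 θ1 θ2 s t) :=
  ⟨rfl, fun n => by dsimp only; rw [play_succ_snd_last]; exact h _ _⟩

end Game

lemma isInfPath_iterate {S K : Type*} {T : S → K → S → Prop} {f : S → K × S}
    (hf : ∀ u, T u (f u).1 (f u).2) (s : S) :
    IsInfPath T s (fun n => (Prod.snd ∘ f)^[n] s) (fun n => (f ((Prod.snd ∘ f)^[n] s)).1) :=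
  ⟨rfl, fun n => by dsimp only; rw [Function.iterate_succ_apply']; exact hf _⟩

lemma iSup_iInf_eq_zero_of_subset {α : Type*} {d : α → α → ℝ≥0∞} (hd : ∀ x, d x x = 0)
    {A B : Set α} (hAB : A ⊆ B) : ⨆ a : A, ⨅ b : B, d a b = 0 :=
  le_antisymm (iSup_le fun a => (iInf_le _ ⟨a, hAB a.2⟩).trans_eq (hd a)) zero_le

section Counterexample

variable {K : Type*} {σ τ : ℕ → K}

namespace T11

lemma inl_zero_iff {k : K} {u : S11} : T11 σ τ (.inl 0) k u ↔ k = σ 0 ∧ u = .inl 1 := by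
  constructor
  · rintro ⟨⟩; exact ⟨rfl, rfl⟩
  · rintro ⟨rfl, rfl⟩; exact .start

lemma inl_one_iff {k : K} {u : S11} :
    T11 σ τ (.inl 1) k u ↔ ∃ c, k = cond c σ τ 1 ∧ u = .inr (c, 2) := by
  constructor
  · rintro ⟨⟩
    exacts [⟨true, rfl, rfl⟩, ⟨false, rfl, rfl⟩]
  · rintro ⟨_ | _, rfl, rfl⟩
    exacts [.uR, .uL]

lemma inl_two_iff {k : K} {u : S11} :
    T11 σ τ (.inl 2) k u ↔ ∃ c, k = cond c σ τ 0 ∧ u = .inr (c, 1) := by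
  constructor
  · rintro ⟨⟩
    exacts [⟨true, rfl, rfl⟩, ⟨false, rfl, rfl⟩]
  · rintro ⟨_ | _, rfl, rfl⟩
    exacts [.tR, .tL]

lemma inr_iff {d : Bool} {n : ℕ} {k : K} {u : S11} :
    T11 σ τ (.inr (d, n)) k u ↔ k = cond d σ τ n ∧ u = .inr (d, n + 1) := by
  constructor
  · rintro ⟨⟩ <;> exact ⟨rfl, rfl⟩
  · rcases d with _ | _ <;> rintro ⟨rfl, rfl⟩
    exacts [.chainR n, .chainL n]

end T11

lemma stays_on_chain {st : ℕ → S11} {w : ℕ → K} (hT : ∀ j, T11 σ τ (st j) (w j) (st (j + 1)))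
    {d : Bool} {k : ℕ} (hk : st k = .inr (d, k)) {n : ℕ} (hn : k ≤ n) :
    st n = .inr (d, n) ∧ w n = cond d σ τ n := by
  induction n, hn using Nat.le_induction with
  | base => exact ⟨hk, (T11.inr_iff.1 (hk ▸ hT k)).1⟩
  | succ m _ ih =>
    have hst : st (m + 1) = .inr (d, m + 1) := (T11.inr_iff.1 (ih.1 ▸ hT m)).2
    exact ⟨hst, (T11.inr_iff.1 (hst ▸ hT (m + 1))).1⟩

lemma isInfPath_inl_zero (h0 : σ 0 = τ 0) {st : ℕ → S11} {w : ℕ → K}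
    (hp : IsInfPath (T11 σ τ) (.inl 0) st w) :
    st 1 = .inl 1 ∧ ∃ c, st 2 = .inr (c, 2) ∧ w = cond c σ τ := by
  obtain ⟨hst0, hT⟩ := hp
  obtain ⟨hw0, hst1⟩ := T11.inl_zero_iff.1 (hst0 ▸ hT 0)
  obtain ⟨c, hw1, hst2⟩ := T11.inl_one_iff.1 (hst1 ▸ hT 1)
  refine ⟨hst1, c, hst2, funext fun n => ?_⟩
  match n with
  | 0 => cases c <;> simp [hw0, h0]
  | 1 => exact hw1
  | n + 2 => exact (stays_on_chain hT hst2 (by omega)).2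

lemma isInfPath_inl_two {st : ℕ → S11} {w : ℕ → K} (hp : IsInfPath (T11 σ τ) (.inl 2) st w) :
    ∃ c, st 1 = .inr (c, 1) ∧ w = cond c σ τ := by
  obtain ⟨hst0, hT⟩ := hp
  obtain ⟨c, hw0, hst1⟩ := T11.inl_two_iff.1 (hst0 ▸ hT 0)
  refine ⟨c, hst1, funext fun n => ?_⟩
  match n with
  | 0 => exact hw0
  | n + 1 => exact (stays_on_chain hT hst1 (by omega)).2

variable (σ τ) in
def followBranch (c : Bool) : S11 → K × S11
  | .inl 0 => (σ 0, .inl 1)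
  | .inl 1 => (cond c σ τ 1, .inr (c, 2))
  | .inl 2 => (cond c σ τ 0, .inr (c, 1))
  | .inr (d, n) => (cond d σ τ n, .inr (d, n + 1))

lemma followBranch_valid (c : Bool) (u : S11) :
    T11 σ τ u (followBranch σ τ c u).1 (followBranch σ τ c u).2 := by
  rcases u with i | ⟨d, n⟩
  · fin_cases i <;> cases c <;> constructor
  · cases d <;> constructor

lemma mem_pair_iff_exists_cond {w : ℕ → K} : w ∈ ({σ, τ} : Set (ℕ → K)) ↔ ∃ c, w = cond c σ τ :=
  ⟨by rintro (rfl | rfl); exacts [⟨true, rfl⟩, ⟨false, rfl⟩], by rintro ⟨_ | _, rfl⟩ <;> simp⟩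

lemma trSet_inl_zero (h0 : σ 0 = τ 0) : TrSet (T11 σ τ) (.inl 0) = {σ, τ} := by
  ext w
  rw [mem_pair_iff_exists_cond]
  constructor
  · rintro ⟨st, hp⟩
    obtain ⟨-, c, -, hw⟩ := isInfPath_inl_zero h0 hp
    exact ⟨c, hw⟩
  · rintro ⟨c, rfl⟩
    have hp := isInfPath_iterate (followBranch_valid (σ := σ) (τ := τ) c) (.inl 0)
    obtain ⟨-, c', hc', hw⟩ := isInfPath_inl_zero h0 hp
    obtain rfl : c = c' := congrArg Prod.fst (Sum.inr_injective hc')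
    exact ⟨_, hw ▸ hp⟩

lemma trSet_inl_two : TrSet (T11 σ τ) (.inl 2) = {σ, τ} := by
  ext w
  rw [mem_pair_iff_exists_cond]
  constructor
  · rintro ⟨st, hp⟩
    obtain ⟨c, -, hw⟩ := isInfPath_inl_two hp
    exact ⟨c, hw⟩
  · rintro ⟨c, rfl⟩
    have hp := isInfPath_iterate (followBranch_valid (σ := σ) (τ := τ) c) (.inl 2)
    obtain ⟨c', hc', hw⟩ := isInfPath_inl_two hp
    obtain rfl : c = c' := congrArg Prod.fst (Sum.inr_injective hc')
    exact ⟨_, hw ▸ hp⟩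

def branchOf : S11 → Bool
  | .inl _ => true
  | .inr (d, _) => d

variable (σ τ) in
def opposeBranch (p q : FPath S11 K) : K × S11 :=
  followBranch σ τ (!branchOf q.last) p.last

lemma opposeBranch_valid : ValidStrat1 (T11 σ τ) (opposeBranch σ τ) :=
  fun p _ => followBranch_valid _ p.last

lemma trace2_followBranch (θ1 : FPath S11 K → FPath S11 K → K × S11) (c : Bool) :
    trace2 θ1 (fun _ q => followBranch σ τ c q.last) (.inl 0) (.inl 2) = cond c σ τ := by
  obtain ⟨c', hc', hw⟩ := isInfPath_inl_two
    (isInfPath_trace2 (θ1 := θ1) (s := .inl 0) fun _ q => followBranch_valid c q.last)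
  rw [play_succ_snd_last] at hc'
  obtain rfl : c = c' := congrArg Prod.fst (Sum.inr_injective hc')
  exact hw

lemma traces_opposeBranch (h0 : σ 0 = τ 0) {θ2 : FPath S11 K → FPath S11 K → K × S11}
    (hθ2 : ValidStrat2 (T11 σ τ) θ2) :
    ∃ c, trace1 (opposeBranch σ τ) θ2 (.inl 0) (.inl 2) = cond (!c) σ τ ∧
      trace2 (opposeBranch σ τ) θ2 (.inl 0) (.inl 2) = cond c σ τ := by
  obtain ⟨c, hc, hw2⟩ :=
    isInfPath_inl_two (isInfPath_trace2 (θ1 := opposeBranch σ τ) (s := .inl 0) hθ2)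
  obtain ⟨h1, c', hc', hw1⟩ := isInfPath_inl_zero h0
    (isInfPath_trace1 (θ2 := θ2) (t := .inl 2) opposeBranch_valid)
  rw [play_succ_fst_last, opposeBranch, h1, hc] at hc'
  obtain rfl : (!c) = c' := congrArg Prod.fst (Sum.inr_injective hc')
  exact ⟨c, hw1, hw2⟩

lemma gameValue_le_min {dT : (ℕ → K) → (ℕ → K) → ℝ≥0∞} (hrefl : ∀ σ, dT σ σ = 0)
    (h0 : σ 0 = τ 0) : gameValue (T11 σ τ) dT (.inl 0) (.inl 2) ≤ min (dT σ τ) (dT τ σ) := by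
  refine iSup_le fun ⟨θ1, hθ1⟩ => ?_
  have payoff_le : ∀ b, ∃ c, ⨅ θ2 : {θ // ValidStrat2 (T11 σ τ) θ},
      dT (trace1 θ1 θ2.1 (.inl 0) (.inl 2)) (trace2 θ1 θ2.1 (.inl 0) (.inl 2)) ≤
        dT (cond c σ τ) (cond b σ τ) := fun b => by
    obtain ⟨-, c, -, hw⟩ := isInfPath_inl_zero h0
      (isInfPath_trace1 (θ2 := fun _ q => followBranch σ τ b q.last) (t := .inl 2) hθ1)
    refine ⟨c, iInf_le_of_le ⟨_, fun _ q => followBranch_valid b q.last⟩ ?_⟩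
    rw [hw, trace2_followBranch]
  obtain ⟨c₁, h₁⟩ := payoff_le true
  obtain ⟨c₂, h₂⟩ := payoff_le false
  cases c₁ <;> cases c₂ <;> simp_all

lemma min_le_gameValue {dT : (ℕ → K) → (ℕ → K) → ℝ≥0∞} (h0 : σ 0 = τ 0) :
    min (dT σ τ) (dT τ σ) ≤ gameValue (T11 σ τ) dT (.inl 0) (.inl 2) := by
  refine le_iSup_of_le ⟨opposeBranch σ τ, opposeBranch_valid⟩
    (le_iInf fun ⟨θ2, hθ2⟩ => ?_)
  obtain ⟨c, h₁, h₂⟩ := traces_opposeBranch h0 hθ2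
  rw [h₁, h₂]
  cases c
  exacts [min_le_left _ _, min_le_right _ _]

end Counterexample

theorem linear_lt_branching_counterexample_general
    {K : Type*} (dT : (ℕ → K) → (ℕ → K) → ℝ≥0∞)
    (hrefl : ∀ σ, dT σ σ = 0)
    (σ τ : ℕ → K) (h0 : σ 0 = τ 0) :
    TrSet (T11 σ τ) (.inl 0) = {σ, τ} ∧
    TrSet (T11 σ τ) (.inl 2) = {σ, τ} ∧
    (⨆ σ' : TrSet (T11 σ τ) (.inl 0), ⨅ τ' : TrSet (T11 σ τ) (.inl 2),
      dT σ' τ') = 0 ∧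
    gameValue (T11 σ τ) dT (.inl 0) (.inl 2) = min (dT σ τ) (dT τ σ) ∧
    (dT σ τ ≠ 0 → dT τ σ ≠ 0 →
      (⨆ σ' : TrSet (T11 σ τ) (.inl 0), ⨅ τ' : TrSet (T11 σ τ) (.inl 2),
        dT σ' τ') < gameValue (T11 σ τ) dT (.inl 0) (.inl 2)) := by
  have hlinear : (⨆ σ' : TrSet (T11 σ τ) (.inl 0), ⨅ τ' : TrSet (T11 σ τ) (.inl 2),
      dT σ' τ') = 0 :=
    iSup_iInf_eq_zero_of_subset hrefl (by rw [trSet_inl_zero h0, trSet_inl_two])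
  have hbranching : gameValue (T11 σ τ) dT (.inl 0) (.inl 2) = min (dT σ τ) (dT τ σ) :=
    le_antisymm (gameValue_le_min hrefl h0) (min_le_gameValue h0)
  refine ⟨trSet_inl_zero h0, trSet_inl_two, hlinear, hbranching, fun hστ hτσ => ?_⟩
  rw [hlinear, hbranching]
  exact lt_min (pos_iff_ne_zero.2 hστ) (pos_iff_ne_zero.2 hτσ)

/-- In the two-state counterexample system, the trace sets of `s` and `t`
coincide (hence the Hausdorff linear distance is 0), while the branching
distance (the game value) equals `min (dT σ τ) (dT τ σ)`; in particular if
`dT` is not one-step indiscriminate then the linear distance is strictly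
below the branching distance. -/
theorem linear_lt_branching_counterexample
    {K : Type*} (dT : (ℕ → K) → (ℕ → K) → ℝ≥0∞)
    (hrefl : ∀ σ, dT σ σ = 0)
    (htri : ∀ σ τ υ, dT σ υ ≤ dT σ τ + dT τ υ)
    (σ τ : ℕ → K) (h0 : σ 0 = τ 0) :
    TrSet (T11 σ τ) (.inl 0) = {σ, τ} ∧
    TrSet (T11 σ τ) (.inl 2) = {σ, τ} ∧
    (⨆ σ' : TrSet (T11 σ τ) (.inl 0), ⨅ τ' : TrSet (T11 σ τ) (.inl 2),
      dT σ' τ') = 0 ∧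
    gameValue (T11 σ τ) dT (.inl 0) (.inl 2) = min (dT σ τ) (dT τ σ) ∧
    (dT σ τ ≠ 0 → dT τ σ ≠ 0 →
      (⨆ σ' : TrSet (T11 σ τ) (.inl 0), ⨅ τ' : TrSet (T11 σ τ) (.inl 2),
        dT σ' τ') < gameValue (T11 σ τ) dT (.inl 0) (.inl 2)) :=
  linear_lt_branching_counterexample_general dT hrefl σ τ h0
end

section
/- Pointwise recursion characterizes discrete simulation: let (S,T) be a non-blocking K-weighted transition system and define I on [0,∞]^{S×S} by I(h)(s,t) = sup_{s→ˣs'} inf_{t→ʸt'} F(x,y,h(s',t')) where F(x,y,z) = z if x = y and ∞ otherwise. Let h* be the least fixed point of I. Then h*(s,t) = 0 if and only if there exists a simulation relation R ⊆ S × S with (s,t) ∈ R, i.e., a relation such that whenever (s',t') ∈ R and s'→ˣs'', there exists t'→ˣt'' with (s'',t'') ∈ R. -/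
/-!
Simulations are the post-fixed points of `simStep`, which relates `s` to `t` when every move of
`s` is matched by an equally labelled move of `t` into the given relation. The iterator sends the
`{0, ∞}`-valued indicator of a relation `R` to the indicator of `simStep R`, so the indicator of
similarity (the greatest fixed point of `simStep`) is a fixed point, hence bounds `h*` from above.
Conversely, at a fixed point `h`, finiteness of `h s t` forces every move of `s` to be matched with
finite value, so `{h < ∞}` is a simulation.
-/

open ENNReal OrderHom

section

variable {S K : Type*} (T : S → K → S → Prop)

def simStep : (S → S → Prop) →o (S → S → Prop) where
  toFun R s t := ∀ x s', T s x s' → ∃ t', T t x t' ∧ R s' t'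
  monotone' _ _ hRR' _ _ h x s' hs :=
    (h x s' hs).imp fun _ ⟨ht, hR⟩ => ⟨ht, hRR' _ _ hR⟩

theorem simStep_apply (R : S → S → Prop) (s t : S) :
    simStep T R s t ↔ ∀ x s', T s x s' → ∃ t', T t x t' ∧ R s' t' :=
  Iff.rfl

noncomputable def discreteIter [DecidableEq K] (h : S → S → ℝ≥0∞) (s t : S) : ℝ≥0∞ :=
  ⨆ p : {p : K × S // T s p.1 p.2},
    ⨅ q : {q : K × S // T t q.1 q.2}, if p.1.1 = q.1.1 then h p.1.2 q.1.2 else ⊤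

open Classical in
noncomputable def zeroTopIndicator (R : S → S → Prop) (s t : S) : ℝ≥0∞ :=
  if R s t then 0 else ⊤

variable {T} [DecidableEq K]

theorem simStep_of_discreteIter_lt_top {h : S → S → ℝ≥0∞} {s t : S}
    (hlt : discreteIter T h s t < ⊤) : simStep T (fun a b => h a b < ⊤) s t := by
  intro x s' hs
  have hinf : (⨅ q : {q : K × S // T t q.1 q.2},
      if x = q.1.1 then h s' q.1.2 else ⊤) < ⊤ :=
    (le_iSup_of_le (⟨(x, s'), hs⟩ : {p : K × S // T s p.1 p.2}) le_rfl).trans_lt hlt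
  obtain ⟨⟨⟨y, t'⟩, ht⟩, hq⟩ := iInf_lt_iff.mp hinf
  by_cases hxy : x = y
  · subst hxy
    exact ⟨t', ht, by simpa using hq⟩
  · simp [hxy] at hq

theorem discreteIter_zeroTopIndicator (R : S → S → Prop) :
    discreteIter T (zeroTopIndicator R) = zeroTopIndicator (simStep T R) := by
  funext s t
  by_cases hst : simStep T R s t
  · rw [zeroTopIndicator, if_pos hst]
    refine iSup_eq_bot.mpr fun ⟨⟨x, s'⟩, hs⟩ => ?_
    obtain ⟨t', ht, hR⟩ := hst x s' hs
    exact le_bot_iff.mp <| iInf_le_of_le ⟨(x, t'), ht⟩ (by simp [zeroTopIndicator, hR])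
  · rw [zeroTopIndicator, if_neg hst]
    obtain ⟨x, s', hs, hunmatched⟩ : ∃ x s', T s x s' ∧ ∀ t', T t x t' → ¬R s' t' := by
      simpa [simStep_apply] using hst
    refine top_unique <| le_iSup_of_le ⟨(x, s'), hs⟩ <| le_iInf fun ⟨⟨y, t'⟩, ht⟩ => ?_
    by_cases hxy : x = y
    · subst hxy
      simp [zeroTopIndicator, hunmatched t' ht]
    · simp [hxy]

theorem discreteIter_zeroTopIndicator_gfp :
    discreteIter T (zeroTopIndicator (gfp (simStep T))) = zeroTopIndicator (gfp (simStep T)) := by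
  rw [discreteIter_zeroTopIndicator, map_gfp]

end

open ENNReal Classical in
theorem discrete_recursion_characterizes_simulation_general
    {S K : Type*} (T : S → K → S → Prop)
    (F : K → K → ℝ≥0∞ → ℝ≥0∞)
    (hF : ∀ (x y : K) (z : ℝ≥0∞), F x y z = (if x = y then z else ⊤))
    (I : (S → S → ℝ≥0∞) → (S → S → ℝ≥0∞))
    (hI : ∀ (h : S → S → ℝ≥0∞) (s t : S),
      I h s t = ⨆ p : {p : K × S // T s p.1 p.2},
        ⨅ q : {q : K × S // T t q.1 q.2}, F p.1.1 q.1.1 (h p.1.2 q.1.2))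
    (hstar : S → S → ℝ≥0∞)
    (hfix : I hstar = hstar)
    (hleast : ∀ h : S → S → ℝ≥0∞, I h = h → hstar ≤ h) :
    ∀ s t : S, hstar s t = 0 ↔
      ∃ R : S → S → Prop, R s t ∧
        ∀ s' t', R s' t' → ∀ x s'', T s' x s'' →
          ∃ t'', T t' x t'' ∧ R s'' t'' := by
  have hIeq : I = discreteIter T := by
    funext h s t
    simp only [hI, hF, discreteIter]
  subst hIeq
  intro s t
  constructor
  · intro h0
    exact ⟨fun a b => hstar a b < ⊤, by simp [h0],
      fun s' t' hlt => simStep_of_discreteIter_lt_top (by rwa [hfix])⟩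
  · rintro ⟨R, hR, hsim⟩
    have hsimilar : gfp (simStep T) s t := le_gfp (simStep T) (a := R) hsim s t hR
    simpa [zeroTopIndicator, hsimilar] using
      hleast _ discreteIter_zeroTopIndicator_gfp s t

open ENNReal Classical in
/-- The least fixed point of the discrete-distance iterator is 0 exactly on
pairs related by a simulation. -/
theorem discrete_recursion_characterizes_simulation
    {S K : Type*} (T : S → K → S → Prop)
    (hnb : ∀ s : S, ∃ x s', T s x s')
    (F : K → K → ℝ≥0∞ → ℝ≥0∞)
    (hF : ∀ (x y : K) (z : ℝ≥0∞), F x y z = (if x = y then z else ⊤))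
    (I : (S → S → ℝ≥0∞) → (S → S → ℝ≥0∞))
    (hI : ∀ (h : S → S → ℝ≥0∞) (s t : S),
      I h s t = ⨆ p : {p : K × S // T s p.1 p.2},
        ⨅ q : {q : K × S // T t q.1 q.2}, F p.1.1 q.1.1 (h p.1.2 q.1.2))
    (hstar : S → S → ℝ≥0∞)
    (hfix : I hstar = hstar)
    (hleast : ∀ h : S → S → ℝ≥0∞, I h = h → hstar ≤ h) :
    ∀ s t : S, hstar s t = 0 ↔
      ∃ R : S → S → Prop, R s t ∧
        ∀ s' t', R s' t' → ∀ x s'', T s' x s'' →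
          ∃ t'', T t' x t'' ∧ R s'' t'' :=
  discrete_recursion_characterizes_simulation_general T F hF I hI hstar hfix hleast
end
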